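/- Let J ⊆ Γ and let Q_h̄^J = {(n, π, h) ∈ Q_h̄ : dom(h) ⊆ ∪_{ξ∈J} D_ξ}. Suppose E ⊆ Q_h̄^J is predense in Q_h̄^J, i.e., every element of Q_h̄^J has a common extension in Q_h̄^J with some element of E. Then for every k ≥ 1 and every p ∈ Q_h̄^J the set B_p^k = ∪ { (q̂)^k : q ∈ Q_h̄, q ≤ p, and q ≤ q₀ for some q₀ ∈ E } is dense in (p̂)^k, where (p̂)^k ⊆ (2^ω × 2^ω)^k carries the product topology. -/

import Mathlib

/-!
Fix a level `m ≥ n^p` and a point `((x_i, y_i))_i` of `(p̂)^k`. Keep the first `m` bits of each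
`x_i` and `y_i` and append to both the same fresh tail `t_i`: the new first coordinates are then
distinct from each other and from `dom h^p`, the new second coordinates distinct from each other
and from `ran h^p` (on which `h^p` is injective, since the `R_ξ` are disjoint). At a level `N`
separating these finitely many reals, `x ↾ N ↦ y ↾ N` is a partial bijection of `2^N` lying
over `π^p`; extending it fibre by fibre gives `q' ≤ p` with the same `h` whose `q̂'` contains the
new points. Predensity gives `q ≤ q'` below some `e ∈ E`, and every `(x, y) ∈ q̂` with `x` a new
first coordinate agrees below `N ≥ m` with the corresponding new point.
-/

/-- Restriction of `x ∈ 2^ω` to its first `n` coordinates. -/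
def res (n : ℕ) (x : ℕ → Bool) : Fin n → Bool := fun i => x i

/-- The basic clopen cylinder `[η] = {x ∈ 2^ω : x↾n = η}` determined by `η ∈ 2^n`. -/
def cyl {n : ℕ} (η : Fin n → Bool) : Set (ℕ → Bool) := {x | res n x = η}

/-- A condition `p = (n, π, h)` of the forcing poset `Q_h̄`, where the family
`h̄ = ⟨h_ξ : ξ ∈ Γ⟩` is given by the domains `Dom ξ ⊆ 2^ω` and (total extensions of)
the functions `hbar ξ`.  The finite partial function `h` is represented by its
graph, a finite set of pairs. -/
structure QCond {Γ : Type*} (Dom : Γ → Set (ℕ → Bool))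
    (hbar : Γ → (ℕ → Bool) → (ℕ → Bool)) where
  /-- the natural number `n` -/
  n : ℕ
  /-- the permutation `π` of `2^n` -/
  perm : Equiv.Perm (Fin n → Bool)
  /-- the graph of the finite partial function `h` -/
  graph : Set ((ℕ → Bool) × (ℕ → Bool))
  /-- `h` is a finite partial function -/
  graph_finite : graph.Finite
  /-- `h` is a function (single-valued) -/
  graph_fun : ∀ z ∈ graph, ∀ w ∈ graph, z.1 = w.1 → z = w
  /-- the domain of `h` is contained in `∪_ξ D_ξ` -/
  dom_sub : ∀ z ∈ graph, ∃ ξ, z.1 ∈ Dom ξ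
  /-- `|dom h ∩ D_ξ| ≤ 1` for every `ξ` -/
  dom_once : ∀ ξ, ∀ z ∈ graph, ∀ w ∈ graph, z.1 ∈ Dom ξ → w.1 ∈ Dom ξ → z = w
  /-- if `x ∈ dom h ∩ D_ξ` then `h x = h_ξ x` -/
  val_eq : ∀ z ∈ graph, ∀ ξ, z.1 ∈ Dom ξ → z.2 = hbar ξ z.1
  /-- if `x ∈ dom h` then `(h x)↾n = π (x↾n)` -/
  proj : ∀ z ∈ graph, res n z.2 = perm (res n z.1)

/-- The order on `Q_h̄`: `q ≤ p` iff `p.n ≤ q.n`, the partial function of `q`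
extends that of `p`, and the permutation of `q` projects onto that of `p`. -/
def QLe {Γ : Type*} {Dom : Γ → Set (ℕ → Bool)} {hbar : Γ → (ℕ → Bool) → (ℕ → Bool)}
    (q p : QCond Dom hbar) : Prop :=
  ∃ hn : p.n ≤ q.n, p.graph ⊆ q.graph ∧
    ∀ η : Fin q.n → Bool,
      (fun i : Fin p.n => q.perm η (Fin.castLE hn i)) =
        p.perm (fun i : Fin p.n => η (Fin.castLE hn i))

/-- `p̂ = ∪_{η ∈ 2^n} [η] × [π η] ⊆ 2^ω × 2^ω`. -/
def Qhat {Γ : Type*} {Dom : Γ → Set (ℕ → Bool)} {hbar : Γ → (ℕ → Bool) → (ℕ → Bool)}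
    (p : QCond Dom hbar) : Set ((ℕ → Bool) × (ℕ → Bool)) :=
  ⋃ η : Fin p.n → Bool, cyl η ×ˢ cyl (p.perm η)


open Filter Topology Function

section Permutations

variable {ι : Type*} [Finite ι]

theorem Equiv.Perm.exists_prodShear_extending {Y Z : Type*} (σ : Equiv.Perm Y)
    (a c : ι → Y × Z) (ha : Injective a) (hc : Injective c) (hac : ∀ i, (c i).1 = σ (a i).1) :
    ∃ π : Equiv.Perm (Y × Z), (∀ x, (π x).1 = σ x.1) ∧ ∀ i, π (a i) = c i := by
  have fiber : ∀ y, ∃ ρ : Equiv.Perm Z, ∀ i : {i // (a i).1 = y}, ρ (a i).2 = (c i).2 := by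
    intro y
    refine Equiv.Perm.exists_extending_pair _ _
      (fun i j h => Subtype.ext (ha (Prod.ext (i.2.trans j.2.symm) h)))
      (fun i j h => Subtype.ext (hc (Prod.ext ?_ h)))
    rw [hac, hac, i.2, j.2]
  choose ρ hρ using fiber
  exact ⟨Equiv.prodShear σ ρ, fun _ => rfl, fun i => Prod.ext (hac i).symm (hρ _ ⟨i, rfl⟩)⟩

theorem Equiv.Perm.exists_take_extending {α : Type*} {n d : ℕ} (σ : Equiv.Perm (Fin n → α))
    (a c : ι → Fin (n + d) → α) (ha : Injective a) (hc : Injective c)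
    (hac : ∀ i, Fin.take n (Nat.le_add_right n d) (c i) =
      σ (Fin.take n (Nat.le_add_right n d) (a i))) :
    ∃ π : Equiv.Perm (Fin (n + d) → α),
      (∀ η, Fin.take n (Nat.le_add_right n d) (π η) = σ (Fin.take n (Nat.le_add_right n d) η)) ∧
        ∀ i, π (a i) = c i := by
  let e := (Fin.appendEquiv (α := α) n d).symm
  obtain ⟨π, hπ, hπac⟩ := exists_prodShear_extending σ (e ∘ a) (e ∘ c)
    (e.injective.comp ha) (e.injective.comp hc) hac
  refine ⟨e.symm.permCongr π, fun η => ?_, fun i => ?_⟩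
  · show (e (e.symm (π (e η)))).1 = σ (e η).1
    rw [e.apply_symm_apply, hπ]
  · show e.symm (π (e (a i))) = c i
    rw [← e.symm_apply_apply (c i)]
    exact congrArg e.symm (hπac i)

end Permutations

section Sequences

theorem res_surjective (n : ℕ) : Surjective (res n) :=
  fun η => ⟨fun j => if h : j < n then η ⟨j, h⟩ else false, funext fun i => dif_pos i.isLt⟩

theorem eventually_injOn_res {S : Set (ℕ → Bool)} (hS : S.Finite) :
    ∀ᶠ N in atTop, S.InjOn (res N) := by
  have separated : ∀ x ∈ S, ∀ y ∈ S, ∀ᶠ N in atTop, res N x = res N y → x = y := by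
    intro x _ y _
    by_cases hxy : x = y
    · exact Eventually.of_forall fun _ _ => hxy
    obtain ⟨j, hj⟩ := Function.ne_iff.mp hxy
    filter_upwards [eventually_gt_atTop j] with N hN h
    exact absurd (congrFun h ⟨j, hN⟩) hj
  exact (hS.eventually_all.2 fun x hx => hS.eventually_all.2 (separated x hx)).mono
    fun _ h x hx y hy => h x hx y hy

theorem exists_perm_res_extending {ι : Type*} [Finite ι] {n : ℕ} (σ : Equiv.Perm (Fin n → Bool))
    (u : ι → (ℕ → Bool) × (ℕ → Bool)) (hu₁ : Injective (Prod.fst ∘ u))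
    (hu₂ : Injective (Prod.snd ∘ u)) (hσ : ∀ i, res n (u i).2 = σ (res n (u i).1)) (N₀ : ℕ) :
    ∃ d, N₀ ≤ n + d ∧ ∃ π : Equiv.Perm (Fin (n + d) → Bool),
      (∀ η, Fin.take n (Nat.le_add_right n d) (π η) = σ (Fin.take n (Nat.le_add_right n d) η)) ∧
        ∀ i, π (res (n + d) (u i).1) = res (n + d) (u i).2 := by
  obtain ⟨N, hN⟩ := eventually_atTop.1
    ((eventually_injOn_res (Set.finite_range (Prod.fst ∘ u))).and
      (eventually_injOn_res (Set.finite_range (Prod.snd ∘ u))))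
  have hsep := hN (n + max N N₀) (by omega)
  exact ⟨max N N₀, by omega, Equiv.Perm.exists_take_extending σ _ _
    (fun i j h => hu₁ (hsep.1 ⟨i, rfl⟩ ⟨j, rfl⟩ h))
    (fun i j h => hu₂ (hsep.2 ⟨i, rfl⟩ ⟨j, rfl⟩ h)) hσ⟩

def splice {α : Type*} (n : ℕ) (x t : ℕ → α) : ℕ → α :=
  fun j => if j < n then x j else t (j - n)

theorem res_splice {m n : ℕ} (h : m ≤ n) (x t : ℕ → Bool) : res m (splice n x t) = res m x :=
  funext fun j => if_pos (lt_of_lt_of_le j.isLt h)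

theorem splice_add {α : Type*} (n : ℕ) (x t : ℕ → α) : (fun j => splice n x t (n + j)) = t :=
  funext fun j => by simp [splice]

theorem injective_sumElim_splice {ι κ α : Type*} (n : ℕ) (x t : ι → ℕ → α) (ht : Injective t)
    (g : κ → ℕ → α) (hg : Injective g) (hgt : ∀ i j, (fun m => g j (n + m)) ≠ t i) :
    Injective (Sum.elim (fun i => splice n (x i) (t i)) g) := by
  refine Injective.sumElim (fun i j h => ht ?_) hg fun i j h => hgt i j ?_
  · simpa only [splice_add] using congrArg (fun y m => y (n + m)) h
  · rw [← h, splice_add]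

theorem exists_injective_forall_notMem {ι α : Type*} [Countable ι] [Infinite α] {F : Set α}
    (hF : F.Finite) : ∃ t : ι → α, Injective t ∧ ∀ i, t i ∉ F := by
  obtain ⟨f, hf⟩ := Countable.exists_injective_nat ι
  let e := hF.infinite_compl.natEmbedding
  exact ⟨fun i => e (f i), (Subtype.val_injective.comp e.injective).comp hf, fun i => (e (f i)).2⟩

theorem tendsto_of_res_eq {x : ℕ → ℕ → Bool} {y : ℕ → Bool} (h : ∀ m, res m (x m) = res m y) :
    Tendsto x atTop (𝓝 y) := by
  refine tendsto_pi_nhds.2 fun j => tendsto_const_nhds.congr' ?_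
  filter_upwards [eventually_gt_atTop j] with m hm
  exact (congrFun (h m) ⟨j, hm⟩).symm

theorem mem_closure_of_forall_res {ι : Type*} {B : Set (ι → (ℕ → Bool) × (ℕ → Bool))}
    {z : ι → (ℕ → Bool) × (ℕ → Bool)}
    (h : ∀ m, ∃ w ∈ B, ∀ i, res m (w i).1 = res m (z i).1 ∧ res m (w i).2 = res m (z i).2) :
    z ∈ closure B := by
  choose w hwB hw using h
  refine mem_closure_of_tendsto (b := atTop) (tendsto_pi_nhds.2 fun i => ?_)
    (Eventually.of_forall hwB)
  exact (tendsto_of_res_eq fun m => (hw m i).1).prodMk_nhds (tendsto_of_res_eq fun m => (hw m i).2)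

end Sequences

section Conditions

variable {Γ : Type*} {Dom : Γ → Set (ℕ → Bool)} {hbar : Γ → (ℕ → Bool) → (ℕ → Bool)}

theorem QLe.trans {q r p : QCond Dom hbar} (hqr : QLe q r) (hrp : QLe r p) : QLe q p := by
  obtain ⟨hn₁, hg₁, hπ₁⟩ := hqr
  obtain ⟨hn₂, hg₂, hπ₂⟩ := hrp
  exact ⟨hn₂.trans hn₁, hg₂.trans hg₁, fun η =>
    (congrArg (Fin.take p.n hn₂) (hπ₁ η)).trans (hπ₂ _)⟩

theorem mem_Qhat_iff {p : QCond Dom hbar} {w : (ℕ → Bool) × (ℕ → Bool)} :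
    w ∈ Qhat p ↔ res p.n w.2 = p.perm (res p.n w.1) := by
  simp only [Qhat, cyl, Set.mem_iUnion, Set.mem_prod, Set.mem_ofPred_eq]
  constructor
  · rintro ⟨η, h₁, h₂⟩
    rw [h₁, h₂]
  · exact fun h => ⟨_, rfl, h⟩

theorem Qhat_mono {q p : QCond Dom hbar} (hqp : QLe q p) : Qhat q ⊆ Qhat p := by
  obtain ⟨hn, -, hπ⟩ := hqp
  intro w hw
  exact mem_Qhat_iff.2 ((congrArg (Fin.take p.n hn) (mem_Qhat_iff.1 hw)).trans (hπ _))

theorem exists_mem_Qhat (p : QCond Dom hbar) (x : ℕ → Bool) : ∃ y, (x, y) ∈ Qhat p :=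
  (res_surjective p.n (p.perm (res p.n x))).imp fun _ h => mem_Qhat_iff.2 h

namespace QCond

theorem fst_injOn (p : QCond Dom hbar) : p.graph.InjOn Prod.fst :=
  fun z hz w hw h => p.graph_fun z hz w hw h

theorem snd_injOn
    (hdisjR : Pairwise fun ξ η => Disjoint (hbar ξ '' Dom ξ) (hbar η '' Dom η))
    (p : QCond Dom hbar) : p.graph.InjOn Prod.snd := by
  intro z hz w hw h
  obtain ⟨ξ, hξ⟩ := p.dom_sub z hz
  obtain ⟨η, hη⟩ := p.dom_sub w hw
  obtain rfl | hne := eq_or_ne ξ η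
  · exact p.dom_once ξ z hz w hw hξ hη
  · refine absurd (hdisjR hne) (Set.not_disjoint_iff.2 ⟨z.2, ?_, ?_⟩)
    · exact ⟨z.1, hξ, (p.val_eq z hz ξ hξ).symm⟩
    · rw [h]
      exact ⟨w.1, hη, (p.val_eq w hw η hη).symm⟩

theorem exists_le_perm_extending {ι : Type*} [Finite ι] (p : QCond Dom hbar)
    (u : ι → (ℕ → Bool) × (ℕ → Bool)) (hu₁ : Injective (Prod.fst ∘ u))
    (hu₂ : Injective (Prod.snd ∘ u)) (hup : ∀ i, u i ∈ Qhat p) (hgraph : p.graph ⊆ Set.range u)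
    (N₀ : ℕ) :
    ∃ q : QCond Dom hbar, QLe q p ∧ q.graph = p.graph ∧ N₀ ≤ q.n ∧ ∀ i, u i ∈ Qhat q := by
  obtain ⟨d, hd, π, hπ, hπu⟩ :=
    exists_perm_res_extending p.perm u hu₁ hu₂ (fun i => mem_Qhat_iff.1 (hup i)) N₀
  let q : QCond Dom hbar :=
    { p with
      n := p.n + d
      perm := π
      proj := fun z hz => by
        obtain ⟨i, rfl⟩ := hgraph hz
        exact (hπu i).symm }
  exact ⟨q, ⟨Nat.le_add_right _ _, subset_rfl, hπ⟩, rfl, hd, fun i => mem_Qhat_iff.2 (hπu i).symm⟩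

theorem exists_le_approx {ι : Type*} [Finite ι]
    (hdisjR : Pairwise fun ξ η => Disjoint (hbar ξ '' Dom ξ) (hbar η '' Dom η))
    (p : QCond Dom hbar) (z : ι → (ℕ → Bool) × (ℕ → Bool)) (hz : ∀ i, z i ∈ Qhat p) (N₀ : ℕ) :
    ∃ q : QCond Dom hbar, QLe q p ∧ q.graph = p.graph ∧ N₀ ≤ q.n ∧
      ∃ w : ι → (ℕ → Bool) × (ℕ → Bool), (∀ i, w i ∈ Qhat q) ∧
        ∀ i, res N₀ (w i).1 = res N₀ (z i).1 ∧ res N₀ (w i).2 = res N₀ (z i).2 := by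
  have := p.graph_finite.to_subtype
  set M := max N₀ p.n
  obtain ⟨t, ht, htF⟩ := exists_injective_forall_notMem (ι := ι)
    ((p.graph_finite.image fun w j => w.1 (M + j)).union
      (p.graph_finite.image fun w j => w.2 (M + j)))
  let u : ι ⊕ p.graph → (ℕ → Bool) × (ℕ → Bool) :=
    Sum.elim (fun i => (splice M (z i).1 (t i), splice M (z i).2 (t i))) Subtype.val
  have hu₁ : Injective (Prod.fst ∘ u) := by
    rw [Sum.comp_elim]
    exact injective_sumElim_splice M _ t ht _ p.fst_injOn.injective
      fun i w h => htF i (Or.inl ⟨w, w.2, h⟩)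
  have hu₂ : Injective (Prod.snd ∘ u) := by
    rw [Sum.comp_elim]
    exact injective_sumElim_splice M _ t ht _ (p.snd_injOn hdisjR).injective
      fun i w h => htF i (Or.inr ⟨w, w.2, h⟩)
  have hup : ∀ i, u i ∈ Qhat p := by
    rintro (i | w)
    · refine mem_Qhat_iff.2 ?_
      change res p.n (splice M _ _) = p.perm (res p.n (splice M _ _))
      rw [res_splice (le_max_right N₀ p.n), res_splice (le_max_right N₀ p.n)]
      exact mem_Qhat_iff.1 (hz i)
    · exact mem_Qhat_iff.2 (p.proj w w.2)
  obtain ⟨q, hqp, hgraph, hN₀, hu⟩ :=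
    p.exists_le_perm_extending u hu₁ hu₂ hup (fun w hw => ⟨Sum.inr ⟨w, hw⟩, rfl⟩) N₀
  exact ⟨q, hqp, hgraph, hN₀, fun i => u (Sum.inl i), fun i => hu _, fun i =>
    ⟨res_splice (le_max_left N₀ p.n) _ _, res_splice (le_max_left N₀ p.n) _ _⟩⟩

end QCond

end Conditions

theorem stmt_16_general {Γ : Type*}
    (Dom : Γ → Set (ℕ → Bool)) (hbar : Γ → (ℕ → Bool) → (ℕ → Bool))
    (hdisjR : Pairwise fun ξ η => Disjoint (hbar ξ '' Dom ξ) (hbar η '' Dom η))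
    (J : Set Γ) (E : Set (QCond Dom hbar))
    -- `E` is predense in `Q_h̄^J`: every element of `Q_h̄^J` has a common
    -- extension in `Q_h̄^J` with some element of `E`
    (hpre : ∀ p : QCond Dom hbar, (∀ z ∈ p.graph, ∃ ξ ∈ J, z.1 ∈ Dom ξ) →
      ∃ q : QCond Dom hbar, (∀ z ∈ q.graph, ∃ ξ ∈ J, z.1 ∈ Dom ξ) ∧
        QLe q p ∧ ∃ e ∈ E, QLe q e)
    (k : ℕ)
    (p : QCond Dom hbar) (hp : ∀ z ∈ p.graph, ∃ ξ ∈ J, z.1 ∈ Dom ξ) :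
    -- `B_p^k` is dense in `(p̂)^k ⊆ (2^ω × 2^ω)^k` (product topology):
    -- every point of `(p̂)^k` lies in the closure of `B_p^k`
    {z : Fin k → (ℕ → Bool) × (ℕ → Bool) | ∀ i, z i ∈ Qhat p} ⊆
      closure {z : Fin k → (ℕ → Bool) × (ℕ → Bool) |
        ∃ q : QCond Dom hbar, QLe q p ∧ (∃ e ∈ E, QLe q e) ∧ ∀ i, z i ∈ Qhat q} := by
  intro z hz
  refine mem_closure_of_forall_res fun m => ?_
  obtain ⟨q', hq'p, hgraph, hm, w, hw, hwz⟩ := p.exists_le_approx hdisjR z hz m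
  obtain ⟨q, -, hqq', e, he, hqe⟩ := hpre q' (hgraph ▸ hp)
  choose y hy using fun i => exists_mem_Qhat q (w i).1
  refine ⟨fun i => ((w i).1, y i), ⟨q, hqq'.trans hq'p, ⟨e, he, hqe⟩, hy⟩, fun i => ⟨(hwz i).1, ?_⟩⟩
  have hyw : res q'.n (y i) = res q'.n (w i).2 :=
    (mem_Qhat_iff.1 (Qhat_mono hqq' (hy i))).trans (mem_Qhat_iff.1 (hw i)).symm
  exact (congrArg (Fin.take m hm) hyw).trans (hwz i).2

theorem stmt_16 {Γ : Type*}
    (Dom : Γ → Set (ℕ → Bool)) (hbar : Γ → (ℕ → Bool) → (ℕ → Bool))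
    (hcount : ∀ ξ, (Dom ξ).Countable)
    (hdisjD : Pairwise fun ξ η => Disjoint (Dom ξ) (Dom η))
    (hdisjR : Pairwise fun ξ η => Disjoint (hbar ξ '' Dom ξ) (hbar η '' Dom η))
    (J : Set Γ) (E : Set (QCond Dom hbar))
    -- `E ⊆ Q_h̄^J`, where `q ∈ Q_h̄^J` iff `dom h^q ⊆ ∪_{ξ ∈ J} D_ξ`
    (hE : ∀ e ∈ E, ∀ z ∈ e.graph, ∃ ξ ∈ J, z.1 ∈ Dom ξ)
    -- `E` is predense in `Q_h̄^J`: every element of `Q_h̄^J` has a common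
    -- extension in `Q_h̄^J` with some element of `E`
    (hpre : ∀ p : QCond Dom hbar, (∀ z ∈ p.graph, ∃ ξ ∈ J, z.1 ∈ Dom ξ) →
      ∃ q : QCond Dom hbar, (∀ z ∈ q.graph, ∃ ξ ∈ J, z.1 ∈ Dom ξ) ∧
        QLe q p ∧ ∃ e ∈ E, QLe q e)
    (k : ℕ) (hk : 1 ≤ k)
    (p : QCond Dom hbar) (hp : ∀ z ∈ p.graph, ∃ ξ ∈ J, z.1 ∈ Dom ξ) :
    -- `B_p^k` is dense in `(p̂)^k ⊆ (2^ω × 2^ω)^k` (product topology):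
    -- every point of `(p̂)^k` lies in the closure of `B_p^k`
    {z : Fin k → (ℕ → Bool) × (ℕ → Bool) | ∀ i, z i ∈ Qhat p} ⊆
      closure {z : Fin k → (ℕ → Bool) × (ℕ → Bool) |
        ∃ q : QCond Dom hbar, QLe q p ∧ (∃ e ∈ E, QLe q e) ∧ ∀ i, z i ∈ Qhat q} :=
  stmt_16_general Dom hbar hdisjR J E hpre k p hp
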